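/- Soundness of FDD sequencing: for all FDDs d₁ and d₂ and every history h, ⟦d₁ ⊙ d₂⟧ h = ⋃_{h' ∈ ⟦d₁⟧ h} ⟦d₂⟧ h' (Kleisli composition of the two packet-processing functions). -/
import Mathlib


namespace NetKAT

/-- Packets: assignments of (natural-number) values to fields. -/
abbrev Packet (F : Type) := F → ℕ

/-- Histories: a nonempty list of packets, represented as (head packet, tail). -/
abbrev Hist (F : Type) := Packet F × List (Packet F)

/-- NetKAT predicates. -/
inductive Pred (F : Type) where
  | id : Pred F
  | drop : Pred F
  | test : F → ℕ → Pred F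
  | or : Pred F → Pred F → Pred F
  | and : Pred F → Pred F → Pred F
  | not : Pred F → Pred F

/-- NetKAT programs. -/
inductive Pol (F : Type) where
  | filter : Pred F → Pol F
  | mod : F → ℕ → Pol F
  | union : Pol F → Pol F → Pol F
  | seq : Pol F → Pol F → Pol F
  | star : Pol F → Pol F
  | dup : Pol F

/-- Iterates of a packet-processing function: `iterRel f 0 h = {h}` and
    `iterRel f (i+1) h = ⋃ h' ∈ f h, iterRel f i h'`. -/
def iterRel {F : Type} (f : Hist F → Set (Hist F)) : ℕ → Hist F → Set (Hist F)
  | 0, h => {h}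
  | i+1, h => ⋃ h' ∈ f h, iterRel f i h'

/-- Semantics of predicates (as filters on histories). -/
def predSem {F : Type} : Pred F → Hist F → Set (Hist F)
  | .id, h => {h}
  | .drop, _ => ∅
  | .test f n, h => if h.1 f = n then {h} else ∅
  | .or a b, h => predSem a h ∪ predSem b h
  | .and a b, h => ⋃ h' ∈ predSem a h, predSem b h'
  | .not a, h => {h} \ predSem a h

/-- Semantics of NetKAT programs: a history is mapped to a set of histories. -/
def polSem {F : Type} [DecidableEq F] : Pol F → Hist F → Set (Hist F)
  | .filter a, h => predSem a h
  | .mod f n, h => {(Function.update h.1 f n, h.2)}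
  | .union p q, h => polSem p h ∪ polSem q h
  | .seq p q, h => ⋃ h' ∈ polSem p h, polSem q h'
  | .star p, h => ⋃ i : ℕ, iterRel (fun h' => polSem p h') i h
  | .dup, h => {(h.1, h.1 :: h.2)}

/-- A program is dup-free if it contains no occurrence of `dup`. -/
def Pol.dupFree {F : Type} : Pol F → Prop
  | .filter _ => True
  | .mod _ _ => True
  | .union p q => p.dupFree ∧ q.dupFree
  | .seq p q => p.dupFree ∧ q.dupFree
  | .star p => p.dupFree
  | .dup => False

/-- Actions: finite partial maps from fields to values. -/
abbrev Act (F : Type) := F → Option ℕ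

/-- Apply an action to a packet. -/
def applyAct {F : Type} (a : Act F) (pk : Packet F) : Packet F :=
  fun f => (a f).getD (pk f)

/-- Semantics of an action on a history. -/
def actSem {F : Type} (a : Act F) (h : Hist F) : Set (Hist F) :=
  {(applyAct a h.1, h.2)}

/-- Forwarding decision diagrams. -/
inductive FDD (F : Type) where
  | const : Finset (Act F) → FDD F
  | cond : F → ℕ → FDD F → FDD F → FDD F

/-- Semantics of FDDs. -/
def fddSem {F : Type} : FDD F → Hist F → Set (Hist F)
  | .const s, h => ⋃ a ∈ s, actSem a h
  | .cond f n d1 d2, h => if h.1 f = n then fddSem d1 h else fddSem d2 h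

variable {F : Type} [Fintype F] [LinearOrder F]

/-- FDD union `d₁ ⊕ d₂`. -/
def fddUnion : FDD F → FDD F → FDD F
  | .const s1, .const s2 => .const (s1 ∪ s2)
  | .cond f n d1 d2, .const s =>
      .cond f n (fddUnion d1 (.const s)) (fddUnion d2 (.const s))
  | .const s, .cond f n d1 d2 =>
      .cond f n (fddUnion (.const s) d1) (fddUnion (.const s) d2)
  | .cond f1 n1 d11 d12, .cond f2 n2 d21 d22 =>
    if f1 = f2 then
      if n1 = n2 then .cond f1 n1 (fddUnion d11 d21) (fddUnion d12 d22)
      else if n1 < n2 then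
        .cond f1 n1 (fddUnion d11 d22) (fddUnion d12 (.cond f2 n2 d21 d22))
      else
        .cond f2 n2 (fddUnion d12 d21) (fddUnion (.cond f1 n1 d11 d12) d22)
    else if f1 < f2 then
      .cond f1 n1 (fddUnion d11 (.cond f2 n2 d21 d22)) (fddUnion d12 (.cond f2 n2 d21 d22))
    else
      .cond f2 n2 (fddUnion (.cond f1 n1 d11 d12) d21) (fddUnion (.cond f1 n1 d11 d12) d22)
termination_by d1 d2 => sizeOf d1 + sizeOf d2
decreasing_by all_goals (simp <;> omega)

/-- Positive restriction `d|_{f=n}`. -/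
def restrictPos (f : F) (n : ℕ) : FDD F → FDD F
  | .const s => .cond f n (.const s) (.const ∅)
  | .cond f1 n1 d1 d2 =>
    if f1 = f then
      if n1 = n then .cond f n d1 (.const ∅)
      else restrictPos f n d2
    else if f < f1 then .cond f n (.cond f1 n1 d1 d2) (.const ∅)
    else .cond f1 n1 (restrictPos f n d1) (restrictPos f n d2)

/-- Negative restriction `d|_{f≠n}`. -/
def restrictNeg (f : F) (n : ℕ) : FDD F → FDD F
  | .const s => .cond f n (.const ∅) (.const s)
  | .cond f1 n1 d1 d2 =>
    if f1 = f then
      if n1 = n then .cond f n (.const ∅) d2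
      else .cond f1 n1 d1 (restrictNeg f n d2)
    else if f < f1 then .cond f n (.const ∅) (.cond f1 n1 d1 d2)
    else .cond f1 n1 (restrictNeg f n d1) (restrictNeg f n d2)

/-- Sequencing of actions `a ; a'`: agrees with `a'` on the domain of `a'`, with `a` elsewhere. -/
def actSeq (a a' : Act F) : Act F :=
  fun f => (a' f).orElse (fun _ => a f)

/-- Sequencing of an action with an FDD, `a ⊙ d`. -/
def actSeqFDD (a : Act F) : FDD F → FDD F
  | .const s => .const (s.image (actSeq a))
  | .cond f n d1 d2 =>
    match a f with
    | some m => if m = n then actSeqFDD a d1 else actSeqFDD a d2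
    | none => .cond f n (actSeqFDD a d1) (actSeqFDD a d2)

/-- FDD sequencing `d₁ ⊙ d₂`. -/
noncomputable def fddSeq : FDD F → FDD F → FDD F
  | .const s, d => (s.toList.map (fun a => actSeqFDD a d)).foldr fddUnion (.const ∅)
  | .cond f n d1 d2, d =>
      fddUnion (restrictPos f n (fddSeq d1 d)) (restrictNeg f n (fddSeq d2 d))

/-- The empty action `⊥`. -/
def emptyAct : Act F := fun _ => none

/-- FDD negation. -/
def fddNeg : FDD F → FDD F
  | .const s => if s = ∅ then .const {emptyAct} else .const ∅
  | .cond f n d1 d2 => .cond f n (fddNeg d1) (fddNeg d2)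

/-- A boolean FDD: every constant diagram occurring in it is `∅` or `{⊥}`. -/
def FDD.boolean : FDD F → Prop
  | .const s => s = ∅ ∨ s = {emptyAct}
  | .cond _ _ d1 d2 => d1.boolean ∧ d2.boolean

/-- The action `{f ← n}` assigning `n` to `f` and undefined elsewhere. -/
def singleAct (f : F) (n : ℕ) : Act F := fun f' => if f' = f then some n else none

/-- Iteration used to compile Kleene star: `e₀ = {⊥}` and `e_{i+1} = {⊥} ⊕ (d ⊙ e_i)`. -/
noncomputable def starIter (d : FDD F) : ℕ → FDD F
  | 0 => .const {emptyAct}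
  | i+1 => fddUnion (.const {emptyAct}) (fddSeq d (starIter d i))

/-- The compilation relation between (dup-free) NetKAT programs and FDDs. -/
inductive Compiles : Pol F → FDD F → Prop where
  | drop : Compiles (.filter .drop) (.const ∅)
  | id : Compiles (.filter .id) (.const {emptyAct})
  | mod (f : F) (n : ℕ) : Compiles (.mod f n) (.const {singleAct f n})
  | test (f : F) (n : ℕ) :
      Compiles (.filter (.test f n)) (.cond f n (.const {emptyAct}) (.const ∅))
  | not {a : Pred F} {d : FDD F} :
      Compiles (.filter a) d → Compiles (.filter (.not a)) (fddNeg d)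
  | por {a b : Pred F} {d1 d2 : FDD F} :
      Compiles (.filter a) d1 → Compiles (.filter b) d2 →
      Compiles (.filter (.or a b)) (fddUnion d1 d2)
  | pand {a b : Pred F} {d1 d2 : FDD F} :
      Compiles (.filter a) d1 → Compiles (.filter b) d2 →
      Compiles (.filter (.and a b)) (fddSeq d1 d2)
  | union {p q : Pol F} {d1 d2 : FDD F} :
      Compiles p d1 → Compiles q d2 → Compiles (.union p q) (fddUnion d1 d2)
  | seq {p q : Pol F} {d1 d2 : FDD F} :
      Compiles p d1 → Compiles q d2 → Compiles (.seq p q) (fddSeq d1 d2)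
  | star {p : Pol F} {d : FDD F} {N : ℕ} :
      Compiles p d → starIter d (N + 1) = starIter d N →
      Compiles (.star p) (starIter d N)

lemma fddUnion_sound (d1 d2 : FDD F) (h : Hist F) :
    fddSem (fddUnion d1 d2) h = fddSem d1 h ∪ fddSem d2 h := by
  induction d1, d2 using fddUnion.induct <;>
    simp only [fddUnion, fddSem] <;>
    (try split_ifs) <;>
    (try simp_all [fddSem, Finset.set_biUnion_union, Set.union_comm, Set.iUnion_or, Set.iUnion_union_distrib]) <;>
    (try omega)

lemma restrictPos_sound (f : F) (n : ℕ) (d : FDD F) (h : Hist F) :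
    fddSem (restrictPos f n d) h = if h.1 f = n then fddSem d h else ∅ := by
  induction d with
  | const s => simp [restrictPos, fddSem]
  | cond f1 n1 a b ih1 ih2 =>
      simp only [restrictPos]
      split_ifs with h1 h2 h3 <;>
        (try subst h1) <;> (try subst h2) <;>
        simp only [fddSem, ih1, ih2] <;> split_ifs <;> simp_all

lemma restrictNeg_sound (f : F) (n : ℕ) (d : FDD F) (h : Hist F) :
    fddSem (restrictNeg f n d) h = if h.1 f = n then ∅ else fddSem d h := by
  induction d with
  | const s => simp [restrictNeg, fddSem]
  | cond f1 n1 a b ih1 ih2 =>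
      simp only [restrictNeg]
      split_ifs with h1 h2 h3 <;>
        (try subst h1) <;> (try subst h2) <;>
        simp only [fddSem, ih1, ih2] <;> split_ifs <;> simp_all

lemma applyAct_actSeq (a a' : Act F) (pk : Packet F) :
    applyAct (actSeq a a') pk = applyAct a' (applyAct a pk) := by
  funext f
  simp only [applyAct, actSeq]
  cases a' f <;> simp [Option.orElse]

lemma actSeqFDD_sound (a : Act F) (d : FDD F) (pk : Packet F) (l : List (Packet F)) :
    fddSem (actSeqFDD a d) (pk, l) = fddSem d (applyAct a pk, l) := by
  induction d with
  | const s =>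
      simp only [actSeqFDD, fddSem]
      ext x
      simp only [Set.mem_iUnion, Finset.mem_image, exists_prop]
      constructor
      · rintro ⟨a', ⟨a'', ha'', rfl⟩, hx⟩
        exact ⟨a'', ha'', by simpa [actSem, applyAct_actSeq] using hx⟩
      · rintro ⟨a', ha', hx⟩
        exact ⟨actSeq a a', ⟨a', ha', rfl⟩, by simpa [actSem, applyAct_actSeq] using hx⟩
  | cond f n d1 d2 ih1 ih2 =>
      simp only [actSeqFDD]
      cases ha : a f with
      | none =>
          have : applyAct a pk f = pk f := by simp [applyAct, ha]
          simp only [fddSem, this]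
          split_ifs <;> simp_all
      | some m =>
          have : applyAct a pk f = m := by simp [applyAct, ha]
          simp only [fddSem, this]
          split_ifs <;> simp_all

lemma foldr_fddUnion_sound (L : List (FDD F)) (h : Hist F) :
    fddSem (L.foldr fddUnion (.const ∅)) h = ⋃ d ∈ L, fddSem d h := by
  induction L with
  | nil => simp [fddSem]
  | cons d L ih => simp [fddUnion_sound, ih]

/-- **Soundness of FDD sequencing.** For all FDDs `d₁`, `d₂` and every history `h`,
`⟦d₁ ⊙ d₂⟧ h = ⋃_{h' ∈ ⟦d₁⟧ h} ⟦d₂⟧ h'`. -/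
theorem fddSeq_sound (d1 d2 : FDD F) (h : Hist F) :
    fddSem (fddSeq d1 d2) h = ⋃ h' ∈ fddSem d1 h, fddSem d2 h' := by
  induction d1 with
  | const s =>
      simp only [fddSeq, foldr_fddUnion_sound]
      ext x
      simp only [fddSem, Set.mem_iUnion, List.mem_map, Finset.mem_toList, exists_prop,
        actSem, Set.mem_singleton_iff]
      constructor
      · rintro ⟨d, ⟨a, ha, rfl⟩, hx⟩
        exact ⟨(applyAct a h.1, h.2), ⟨a, ha, rfl⟩,
          by simpa [actSeqFDD_sound a d2 h.1 h.2] using hx⟩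
      · rintro ⟨h', ⟨a, ha, rfl⟩, hx⟩
        exact ⟨actSeqFDD a d2, ⟨a, ha, rfl⟩,
          by simpa [actSeqFDD_sound a d2 h.1 h.2] using hx⟩
  | cond f n a b ih1 ih2 =>
      simp only [fddSeq, fddUnion_sound, restrictPos_sound, restrictNeg_sound, fddSem,
        ih1, ih2]
      split_ifs <;> simp

end NetKAT
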